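/- Let 1 < γ < 2 and d a positive integer. Then ∑_{ℓ=1}^{∞} (d + ℓ)^{-γ/2} ℓ^{-γ/2} ≤ d^{1-γ} ∫_0^∞ (1+x)^{-γ/2} x^{-γ/2} dx, and the integral ∫_0^∞ (1+x)^{-γ/2} x^{-γ/2} dx is finite. -/

import Mathlib

/-!
With `s = γ/2`, the summand is `g (ℓ + 1)` for `g x = (d + x)^{-s} x^{-s}`, which is nonnegative
and decreasing on `(0, ∞)`, so the sum is at most `∫_0^∞ g`; the substitution `x = d y` turns
this integral into `d^{1-2s} ∫_0^∞ (1 + y)^{-s} y^{-s} dy`. The latter integral converges since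
its integrand is `O(y^{-s})` near `0` and `O(y^{-2s})` near `∞`.
-/

open MeasureTheory Set Real

/- Unlike `AntitoneOn.tsum_add_one_le_integral`, only monotonicity on the open half-line is assumed,
so `f` may blow up at `0`; the first unit interval is then handled separately. -/
theorem AntitoneOn.tsum_add_one_le_integral_Ioi {f : ℝ → ℝ} (anti : AntitoneOn f (Ioi 0))
    (integrable : IntegrableOn f (Ioi 0)) (nonneg : ∀ t ∈ Ioi (0 : ℝ), 0 ≤ f t) :
    ∑' n : ℕ, f (n + 1) ≤ ∫ x in Ioi 0, f x := by
  have anti_tail : AntitoneOn f (Ici ((1 : ℕ) : ℝ)) :=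
    anti.mono fun x hx => lt_of_lt_of_le one_pos (by simpa using hx)
  have integrable_tail : IntegrableOn f (Ioi ((1 : ℕ) : ℝ)) :=
    integrable.mono_set (Ioi_subset_Ioi (by norm_num))
  have nonneg_tail : ∀ t ∈ Ioi ((1 : ℕ) : ℝ), 0 ≤ f t :=
    fun t ht => nonneg t (lt_trans one_pos (by simpa using ht))
  have summable : Summable fun n : ℕ => f (n + 1) := by
    have := (summable_nat_add_iff 1).mpr
      (anti_tail.summable_of_integrableOn_Ioi integrable_tail nonneg_tail)
    simpa using this
  have head : f 1 ≤ ∫ x in Ioc 0 1, f x := by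
    simpa using setIntegral_ge_of_const_le_real measurableSet_Ioc (by simp)
      (fun x hx => anti hx.1 (mem_Ioi.mpr one_pos) hx.2)
      (integrable.mono_set Ioc_subset_Ioi_self)
  have tail : ∑' n : ℕ, f (n + 1 + 1) ≤ ∫ x in Ioi 1, f x := by
    simpa [add_assoc, one_add_one_eq_two] using
      anti_tail.tsum_comp_add_le_integral 1 integrable_tail nonneg_tail
  calc ∑' n : ℕ, f (n + 1)
      = f 1 + ∑' n : ℕ, f (n + 1 + 1) := by simpa using summable.tsum_eq_zero_add
    _ ≤ (∫ x in Ioc 0 1, f x) + ∫ x in Ioi 1, f x := add_le_add head tail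
    _ = ∫ x in Ioi 0, f x := by
      rw [← setIntegral_union Ioc_disjoint_Ioi_same measurableSet_Ioi
        (integrable.mono_set Ioc_subset_Ioi_self)
        (integrable.mono_set (Ioi_subset_Ioi zero_le_one)),
        Ioc_union_Ioi_eq_Ioi zero_le_one]

theorem antitoneOn_add_rpow_neg_mul_rpow_neg {a b c : ℝ} (ha : 0 ≤ a) (hb : 0 ≤ b)
    (hc : 0 ≤ c) : AntitoneOn (fun x : ℝ => (c + x) ^ (-a) * x ^ (-b)) (Ioi 0) :=
  fun x hx y hy hxy =>
    mul_le_mul (rpow_le_rpow_of_nonpos (by linarith [mem_Ioi.mp hx]) (by linarith)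
        (neg_nonpos.mpr ha))
      (rpow_le_rpow_of_nonpos hx hxy (neg_nonpos.mpr hb))
      (rpow_nonneg (le_of_lt hy) _) (rpow_nonneg (by linarith [mem_Ioi.mp hx]) _)

theorem integrableOn_add_rpow_neg_mul_rpow_neg {a b c : ℝ} (ha : 0 ≤ a) (hb : b < 1)
    (hab : 1 < a + b) (hc : 0 < c) :
    IntegrableOn (fun x : ℝ => (c + x) ^ (-a) * x ^ (-b)) (Ioi 0) := by
  have measurable : AEStronglyMeasurable (fun x : ℝ => (c + x) ^ (-a) * x ^ (-b)) :=
    (by fun_prop : Measurable fun x : ℝ => (c + x) ^ (-a) * x ^ (-b)).aestronglyMeasurable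
  have norm_eq :
      ∀ x ∈ Ioi (0 : ℝ), ‖(c + x) ^ (-a) * x ^ (-b)‖ = (c + x) ^ (-a) * x ^ (-b) :=
    fun x hx => norm_of_nonneg <|
      mul_nonneg (rpow_nonneg (by linarith [mem_Ioi.mp hx]) _) (rpow_nonneg (le_of_lt hx) _)
  rw [← Ioc_union_Ioi_eq_Ioi zero_le_one, integrableOn_union]
  constructor
  · have dom : IntegrableOn (fun x : ℝ => c ^ (-a) * x ^ (-b)) (Ioc 0 1) :=
      ((intervalIntegrable_iff_integrableOn_Ioc_of_le zero_le_one).mp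
        (intervalIntegral.intervalIntegrable_rpow' (by linarith))).const_mul _
    refine dom.mono' measurable.restrict (ae_restrict_of_forall_mem measurableSet_Ioc ?_)
    intro x hx
    rw [norm_eq x hx.1]
    exact mul_le_mul_of_nonneg_right
      (rpow_le_rpow_of_nonpos hc (by linarith [hx.1]) (neg_nonpos.mpr ha))
      (rpow_nonneg (le_of_lt hx.1) _)
  · have dom : IntegrableOn (fun x : ℝ => x ^ (-(a + b))) (Ioi 1) :=
      integrableOn_Ioi_rpow_of_lt (by linarith) one_pos
    refine dom.mono' measurable.restrict (ae_restrict_of_forall_mem measurableSet_Ioi ?_)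
    intro x hx
    have hx0 : 0 < x := lt_trans one_pos hx
    rw [norm_eq x hx0, neg_add, rpow_add hx0]
    exact mul_le_mul_of_nonneg_right
      (rpow_le_rpow_of_nonpos hx0 (by linarith) (neg_nonpos.mpr ha)) (rpow_nonneg hx0.le _)

theorem integral_add_rpow_neg_mul_rpow_neg_Ioi {a b c : ℝ} (hc : 0 < c) :
    ∫ x in Ioi 0, (c + x) ^ (-a) * x ^ (-b)
      = c ^ (1 - a - b) * ∫ x in Ioi 0, (1 + x) ^ (-a) * x ^ (-b) := by
  have scale : ∀ x ∈ Ioi (0 : ℝ),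
      (c + c * x) ^ (-a) * (c * x) ^ (-b) = c ^ (-a - b) * ((1 + x) ^ (-a) * x ^ (-b)) := by
    intro x hx
    rw [show c + c * x = c * (1 + x) by ring, mul_rpow hc.le (by linarith [mem_Ioi.mp hx]),
      mul_rpow hc.le (le_of_lt hx), sub_eq_add_neg, rpow_add hc]
    ring
  rw [← mul_zero c, ← integral_comp_mul_left_Ioi' _ 0 hc, mul_zero,
    setIntegral_congr_fun measurableSet_Ioi scale, integral_const_mul, smul_eq_mul, ← mul_assoc,
    show 1 - a - b = 1 + (-a - b) by ring, rpow_add hc, rpow_one]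

/-- For `1 < γ < 2` and a positive integer `d`,
`∑_{ℓ=1}^∞ (d+ℓ)^{-γ/2} ℓ^{-γ/2} ≤ d^{1-γ} ∫_0^∞ (1+x)^{-γ/2} x^{-γ/2} dx`,
and the integral is finite. -/
theorem stmt4 (γ : ℝ) (hγ1 : 1 < γ) (hγ2 : γ < 2) (d : ℕ) (hd : 1 ≤ d) :
    (∑' ℓ : ℕ, ((d : ℝ) + (ℓ + 1)) ^ (-(γ / 2)) * ((ℓ : ℝ) + 1) ^ (-(γ / 2))
      ≤ (d : ℝ) ^ (1 - γ) *
        ∫ x in Set.Ioi (0 : ℝ), (1 + x) ^ (-(γ / 2)) * x ^ (-(γ / 2))) ∧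
    IntegrableOn (fun x : ℝ => (1 + x) ^ (-(γ / 2)) * x ^ (-(γ / 2)))
      (Set.Ioi (0 : ℝ)) := by
  have hs : 0 ≤ γ / 2 := by linarith
  have hs1 : γ / 2 < 1 := by linarith
  have hss : 1 < γ / 2 + γ / 2 := by linarith
  have hd0 : (0 : ℝ) < d := by exact_mod_cast hd
  refine ⟨?_, integrableOn_add_rpow_neg_mul_rpow_neg hs hs1 hss one_pos⟩
  calc ∑' ℓ : ℕ, ((d : ℝ) + (ℓ + 1)) ^ (-(γ / 2)) * ((ℓ : ℝ) + 1) ^ (-(γ / 2))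
      ≤ ∫ x in Ioi 0, ((d : ℝ) + x) ^ (-(γ / 2)) * x ^ (-(γ / 2)) :=
        (antitoneOn_add_rpow_neg_mul_rpow_neg hs hs hd0.le).tsum_add_one_le_integral_Ioi
          (integrableOn_add_rpow_neg_mul_rpow_neg hs hs1 hss hd0)
          fun x hx => mul_nonneg (rpow_nonneg (by linarith [mem_Ioi.mp hx]) _)
            (rpow_nonneg (le_of_lt hx) _)
    _ = (d : ℝ) ^ (1 - γ) * ∫ x in Ioi 0, (1 + x) ^ (-(γ / 2)) * x ^ (-(γ / 2)) := by
      rw [integral_add_rpow_neg_mul_rpow_neg_Ioi hd0, show 1 - γ / 2 - γ / 2 = 1 - γ by ring]
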